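/- For all distinct letters a₀, a₁ and every word t₀, there exists m ≥ 1 such that the words s₁, ..., s_m and t₁, ..., t_{m-1} of the border recursion are defined and satisfy: |s₁| < |s₂| < ... < |s_m| = |t_{m-1}| ≤ |t_{m-2}| ≤ ... ≤ |t₀|, s_m = t_{m-1} (equivalently, a_m t_{m-1} is unbordered), and |t₀| ≤ |s_m| + |s_{m-1}| (where s₀ := ε in case m = 1). -/
import Mathlib


open List

variable {A : Type*}

/-- `u` is a border of `w`: `u` is nonempty, a prefix of `w`, and a suffix of `w`
(in particular every nonempty word is a border of itself). -/
def IsBorder (u w : List A) : Prop :=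
  u ≠ [] ∧ u <+: w ∧ u <:+ w

/-- `w` is bordered if it has a border strictly shorter than itself. -/
def Bordered (w : List A) : Prop :=
  ∃ u, IsBorder u w ∧ u.length < w.length

/-- `w` is unbordered if it is not bordered. -/
def Unbordered (w : List A) : Prop := ¬ Bordered w

/-- The (minimum) period `∂(w)` of a word `w`: the least positive `p ≤ |w|` such that
the letter at position `i` equals the letter at position `i + p` whenever both exist. -/
noncomputable def period (w : List A) : ℕ :=
  sInf {p | 0 < p ∧ p ≤ w.length ∧ ∀ i, i + p < w.length → w[i]? = w[i + p]?}

/-- `μ(w)`: the maximum length of an unbordered factor of `w`. -/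
noncomputable def mu (w : List A) : ℕ :=
  sSup {n | ∃ v : List A, v.length = n ∧ v <:+: w ∧ Unbordered v}

/-- `g` is the shortest border of `w` (among all borders, including `w` itself). -/
def ShortestBorderOf (g w : List A) : Prop :=
  IsBorder g w ∧ ∀ g' : List A, IsBorder g' w → g.length ≤ g'.length

/-- `a :: z'` is the longest unbordered prefix of `a :: z`. -/
def LongestUnborderedPrefix (a : A) (z' z : List A) : Prop :=
  z' <+: z ∧ Unbordered (a :: z') ∧
    ∀ z'' : List A, z'' <+: z → Unbordered (a :: z'') → z''.length ≤ z'.length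

/-- The letter `a_i` of the border recursion: `a₀` if `i` is even, `a₁` if odd. -/
def recLetter (a₀ a₁ : A) (i : ℕ) : A := if i % 2 = 0 then a₀ else a₁

/-- Duval's border recursion for distinct letters `a₀, a₁` and a word `t₀`,
carried out by the sequences `s`, `t`, `s'`, `s''` and terminating at step `m`:
for `1 ≤ i ≤ m`, `a_i s_i` is the shortest border of `a_i t_{i-1}`; for `1 ≤ i < m`,
`a_{i+1} s'_i` is the longest unbordered prefix of `a_{i+1} s_i`, `s'_i s''_i = s_i`
and `t_i s''_i = t_{i-1}`; and `m` is the first index with `s_m = t_{m-1}`.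
(We also fix `s 0 = ε` as a convention.) -/
structure BorderRecursion (a₀ a₁ : A) (t₀ : List A) (m : ℕ)
    (s t s' s'' : ℕ → List A) : Prop where
  one_le_m : 1 ≤ m
  t_zero : t 0 = t₀
  s_zero : s 0 = []
  shortest_border : ∀ i, 1 ≤ i → i ≤ m →
    ShortestBorderOf (recLetter a₀ a₁ i :: s i) (recLetter a₀ a₁ i :: t (i - 1))
  lup : ∀ i, 1 ≤ i → i < m →
    LongestUnborderedPrefix (recLetter a₀ a₁ (i + 1)) (s' i) (s i)
  s_split : ∀ i, 1 ≤ i → i < m → s' i ++ s'' i = s i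
  t_split : ∀ i, 1 ≤ i → i < m → t i ++ s'' i = t (i - 1)
  terminates : s m = t (m - 1)
  first : ∀ i, 1 ≤ i → i < m → s i ≠ t (i - 1)

section Aux

private lemma suffix_of_suffix_length_le' {u v w : List A} (h1 : u <:+ w) (h2 : v <:+ w)
    (h : u.length ≤ v.length) : u <:+ v := by
  rw [← List.reverse_prefix] at h1 h2 ⊢
  exact List.prefix_of_prefix_length_le h1 h2 (by simpa using h)

private lemma suffix_of_cons_suffix {a : A} {u t : List A} (h : u <:+ a :: t)
    (hlen : u.length ≤ t.length) : u <:+ t := by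
  rcases List.suffix_cons_iff.1 h with h | h
  · subst h; simp only [List.length_cons] at hlen; omega
  · exact h

private lemma unbordered_singleton (a : A) : Unbordered [a] := by
  rintro ⟨u, ⟨hu, _, _⟩, hlt⟩
  simp only [List.length_cons, List.length_nil] at hlt
  exact hu (List.length_eq_zero_iff.1 (by omega))

private lemma exists_shortestBorder (a : A) (t : List A) :
    ∃ s : List A, s <+: t ∧ ShortestBorderOf (a :: s) (a :: t) := by
  have hself : IsBorder (a :: t) (a :: t) := ⟨by simp, List.prefix_refl _, List.suffix_refl _⟩
  have hnonempty : {n | ∃ u : List A, IsBorder u (a :: t) ∧ u.length = n}.Nonempty :=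
    ⟨(a :: t).length, a :: t, hself, rfl⟩
  obtain ⟨u, hu, hulen⟩ := Nat.sInf_mem hnonempty
  obtain ⟨x, s, rfl⟩ : ∃ x s, u = x :: s := by
    cases u with
    | nil => exact absurd rfl hu.1
    | cons x s => exact ⟨x, s, rfl⟩
  obtain ⟨hx, hs⟩ := List.cons_prefix_cons.1 hu.2.1
  subst hx
  refine ⟨s, hs, hu, fun g' hg' => ?_⟩
  rw [hulen]
  exact Nat.sInf_le ⟨g', hg', rfl⟩

private lemma ShortestBorderOf.unbordered' {g w : List A} (h : ShortestBorderOf g w) :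
    Unbordered g := by
  rintro ⟨u, ⟨hu, hp, hs⟩, hlt⟩
  have hb : IsBorder u w := ⟨hu, hp.trans h.1.2.1, hs.trans h.1.2.2⟩
  have := h.2 u hb
  omega

private lemma exists_lup (c : A) (z : List A) : ∃ z', LongestUnborderedPrefix c z' z := by
  have h0 : (0 : ℕ) ∈ {n | n ≤ z.length ∧ Unbordered (c :: z.take n)} :=
    ⟨Nat.zero_le _, by simpa using unbordered_singleton c⟩
  have hbdd : BddAbove {n | n ≤ z.length ∧ Unbordered (c :: z.take n)} :=
    ⟨z.length, fun n hn => hn.1⟩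
  obtain ⟨hle, hub⟩ := Nat.sSup_mem ⟨0, h0⟩ hbdd
  refine ⟨z.take (sSup {n | n ≤ z.length ∧ Unbordered (c :: z.take n)}),
    List.take_prefix _ _, hub, fun z'' hz'' hu => ?_⟩
  have hlen : z''.length ≤ z.length := hz''.length_le
  have hmem : z''.length ∈ {n | n ≤ z.length ∧ Unbordered (c :: z.take n)} :=
    ⟨hlen, by rw [← List.prefix_iff_eq_take.1 hz'']; exact hu⟩
  have := le_csSup hbdd hmem
  simpa [List.length_take, Nat.min_eq_left hle] using this

private lemma key_increase {b c : A} (hbc : b ≠ c) {tp sp s'v s''v tnew spnew : List A}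
    (h0 : ShortestBorderOf (b :: sp) (b :: tp))
    (hlt : sp.length < tp.length)
    (hlup : LongestUnborderedPrefix c s'v sp)
    (hsplit : s'v ++ s''v = sp)
    (htnew : tnew ++ s''v = tp)
    (h0' : ShortestBorderOf (c :: spnew) (c :: tnew)) :
    sp.length < spnew.length := by
  by_contra hcon
  push_neg at hcon
  have l1 : s'v.length + s''v.length = sp.length := by rw [← hsplit]; simp
  have l2 : tnew.length + s''v.length = tp.length := by rw [← htnew]; simp
  have hs'v_lt : s'v.length < tnew.length := by omega
  have hsp_pre : sp <+: tp := (List.cons_prefix_cons.1 h0.1.2.1).2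
  have hbsp_suf : (b :: sp) <:+ tp :=
    suffix_of_cons_suffix h0.1.2.2 (by simp only [List.length_cons]; omega)
  have hbs'v_suf : (b :: s'v) <:+ tnew := by
    obtain ⟨x, hx⟩ := hbsp_suf
    rw [← hsplit] at hx
    refine ⟨x, List.append_cancel_right (bs := s''v) ?_⟩
    rw [htnew, ← hx]
    simp [List.append_assoc]
  have hsn_pre_tnew : spnew <+: tnew := (List.cons_prefix_cons.1 h0'.1.2.1).2
  have hsn_pre_tp : spnew <+: tp := hsn_pre_tnew.trans ⟨s''v, htnew⟩
  have hsn_pre_sp : spnew <+: sp := List.prefix_of_prefix_length_le hsn_pre_tp hsp_pre hcon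
  have hsn_unb : Unbordered (c :: spnew) := h0'.unbordered'
  have hsn_le : spnew.length ≤ s'v.length := hlup.2.2 spnew hsn_pre_sp hsn_unb
  have hcsn_suf : (c :: spnew) <:+ (c :: tnew) := h0'.1.2.2
  rcases eq_or_lt_of_le hsn_le with heq | hlt2
  · have heq' : spnew = s'v :=
      (List.prefix_of_prefix_length_le hsn_pre_sp hlup.1 hsn_le).eq_of_length heq
    subst heq'
    have h1 : (c :: spnew) <:+ tnew :=
      suffix_of_cons_suffix hcsn_suf (by simp only [List.length_cons]; omega)
    have h2 : (c :: spnew) <:+ (b :: spnew) :=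
      suffix_of_suffix_length_le' h1 hbs'v_suf (by simp)
    have h3 : (c :: spnew) = (b :: spnew) := h2.eq_of_length (by simp)
    exact hbc (by injection h3 with h3a; exact h3a.symm)
  · refine hlup.2.1 ⟨c :: spnew, ⟨by simp, ?_, ?_⟩, by simp only [List.length_cons]; omega⟩
    · exact List.cons_prefix_cons.2
        ⟨rfl, List.prefix_of_prefix_length_le hsn_pre_sp hlup.1 hsn_le⟩
    · have hsuf_tnew : (c :: spnew) <:+ tnew :=
        suffix_of_cons_suffix hcsn_suf (by simp only [List.length_cons]; omega)
      have hsuf_bs : (c :: spnew) <:+ (b :: s'v) :=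
        suffix_of_suffix_length_le' hsuf_tnew hbs'v_suf
          (by simp only [List.length_cons]; omega)
      have hsuf_s : (c :: spnew) <:+ s'v :=
        suffix_of_cons_suffix hsuf_bs (by simp only [List.length_cons]; omega)
      exact hsuf_s.trans (List.suffix_cons _ _)

private lemma recLetter_add_two (a₀ a₁ : A) (j : ℕ) :
    recLetter a₀ a₁ (j + 2) = recLetter a₀ a₁ j := by
  simp [recLetter, Nat.add_mod_right]

private lemma recLetter_ne {a₀ a₁ : A} (hne : a₀ ≠ a₁) (i : ℕ) :
    recLetter a₀ a₁ i ≠ recLetter a₀ a₁ (i + 1) := by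
  rcases Nat.mod_two_eq_zero_or_one i with h | h
  · have h2 : (i + 1) % 2 = 1 := by omega
    simp [recLetter, h, h2]; exact hne
  · have h2 : (i + 1) % 2 = 0 := by omega
    simp [recLetter, h, h2]; exact hne.symm

private def Concl (a₀ a₁ : A) (j : ℕ) (tp sp prev : List A) : Prop :=
  ∃ (m : ℕ) (s t s' s'' : ℕ → List A),
    j + 1 ≤ m ∧ t j = tp ∧ s (j + 1) = sp ∧
    (∀ i, j + 1 ≤ i → i ≤ m →
      ShortestBorderOf (recLetter a₀ a₁ i :: s i) (recLetter a₀ a₁ i :: t (i - 1))) ∧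
    (∀ i, j + 1 ≤ i → i < m →
      LongestUnborderedPrefix (recLetter a₀ a₁ (i + 1)) (s' i) (s i)) ∧
    (∀ i, j + 1 ≤ i → i < m → s' i ++ s'' i = s i) ∧
    (∀ i, j + 1 ≤ i → i < m → t i ++ s'' i = t (i - 1)) ∧
    s m = t (m - 1) ∧
    (∀ i, j + 1 ≤ i → i < m → s i ≠ t (i - 1)) ∧
    (∀ i, j + 1 ≤ i → i < m → (s i).length < (s (i + 1)).length) ∧
    (∀ i, j + 1 ≤ i → i < m → (t i).length ≤ (t (i - 1)).length) ∧
    tp.length + prev.length ≤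
      (s m).length + (if m = j + 1 then prev.length else (s (m - 1)).length)

private lemma concl_base (a₀ a₁ : A) (j : ℕ) (tp sp prev : List A)
    (h0 : ShortestBorderOf (recLetter a₀ a₁ (j + 1) :: sp) (recLetter a₀ a₁ (j + 1) :: tp))
    (heq : sp = tp) : Concl a₀ a₁ j tp sp prev := by
  refine ⟨j + 1, fun i => if i = j + 1 then sp else [], fun i => if i = j then tp else [],
    fun _ => [], fun _ => [], le_refl _, by simp, by simp, ?_,
    fun i h1 h2 => absurd h2 (by omega), fun i h1 h2 => absurd h2 (by omega),
    fun i h1 h2 => absurd h2 (by omega), ?_, fun i h1 h2 => absurd h2 (by omega),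
    fun i h1 h2 => absurd h2 (by omega), fun i h1 h2 => absurd h2 (by omega), ?_⟩
  · intro i h1 h2
    have hi : i = j + 1 := by omega
    subst hi
    simpa using h0
  · simp [heq]
  · simp [heq]

private lemma aux_main (a₀ a₁ : A) (hne : a₀ ≠ a₁) :
    ∀ (n j : ℕ) (tp sp prev : List A),
      tp.length ≤ n + sp.length →
      ShortestBorderOf (recLetter a₀ a₁ (j + 1) :: sp) (recLetter a₀ a₁ (j + 1) :: tp) →
      prev <+: sp →
      Unbordered (recLetter a₀ a₁ j :: prev) →
      Concl a₀ a₁ j tp sp prev := by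
  intro n
  induction n with
  | zero =>
    intro j tp sp prev hn h0 h1 h2
    have hpre : sp <+: tp := (List.cons_prefix_cons.1 h0.1.2.1).2
    exact concl_base a₀ a₁ j tp sp prev h0
      (hpre.eq_of_length (le_antisymm hpre.length_le (by omega)))
  | succ n ih =>
    intro j tp sp prev hn h0 h2 h3
    have hpre : sp <+: tp := (List.cons_prefix_cons.1 h0.1.2.1).2
    by_cases hcase : sp = tp
    · exact concl_base a₀ a₁ j tp sp prev h0 hcase
    · have hlt : sp.length < tp.length :=
        lt_of_le_of_ne hpre.length_le (fun h => hcase (hpre.eq_of_length h))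
      have hbc : recLetter a₀ a₁ (j + 1) ≠ recLetter a₀ a₁ (j + 2) := recLetter_ne hne (j + 1)
      obtain ⟨s'v, hlup⟩ := exists_lup (recLetter a₀ a₁ (j + 2)) sp
      obtain ⟨s''v, hsplit⟩ : ∃ s''v, s'v ++ s''v = sp := hlup.1
      have hbsp_suf : (recLetter a₀ a₁ (j + 1) :: sp) <:+ tp :=
        suffix_of_cons_suffix h0.1.2.2 (by simp only [List.length_cons]; omega)
      have hs''sp : s''v <:+ sp := ⟨s'v, hsplit⟩
      have hs''_suf : s''v <:+ tp := hs''sp.trans ((List.suffix_cons _ _).trans hbsp_suf)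
      obtain ⟨tnew, htnew⟩ := hs''_suf
      obtain ⟨spnew, hspnew_pre, h0'⟩ := exists_shortestBorder (recLetter a₀ a₁ (j + 2)) tnew
      have hkey : sp.length < spnew.length := key_increase hbc h0 hlt hlup hsplit htnew h0'
      have l1 : s'v.length + s''v.length = sp.length := by rw [← hsplit]; simp
      have l2 : tnew.length + s''v.length = tp.length := by rw [← htnew]; simp
      have hspn_le : spnew.length ≤ tnew.length := hspnew_pre.length_le
      have htnew_pre : tnew <+: tp := ⟨s''v, htnew⟩
      have hsp_pre_spnew : sp <+: spnew :=
        List.prefix_of_prefix_length_le hpre (hspnew_pre.trans htnew_pre) (le_of_lt hkey)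
      have hunb : Unbordered (recLetter a₀ a₁ (j + 1) :: sp) := h0.unbordered'
      have hprevle : prev.length ≤ s'v.length :=
        hlup.2.2 prev h2 (by rw [recLetter_add_two]; exact h3)
      have hrec := ih (j + 1) tnew spnew sp (by omega) h0' hsp_pre_spnew hunb
      obtain ⟨m, s, t, s', s'', hm, ht1, hs1, hSB, hLUP, hSS, hTS, hterm, hfirst,
        hmono, htmono, hbnd⟩ := hrec
      have hmj : j + 2 ≤ m := by omega
      refine ⟨m, (fun i => if i = j + 1 then sp else s i),
        (fun i => if i = j then tp else t i),
        (fun i => if i = j + 1 then s'v else s' i),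
        (fun i => if i = j + 1 then s''v else s'' i),
        by omega, by simp, by simp, ?_, ?_, ?_, ?_, ?_, ?_, ?_, ?_, ?_⟩
      · intro i hi1 hi2
        by_cases h : i = j + 1
        · subst h; simpa using h0
        · simp only [if_neg h, if_neg (show ¬ i - 1 = j by omega)]
          exact hSB i (by omega) hi2
      · intro i hi1 hi2
        by_cases h : i = j + 1
        · subst h; simpa using hlup
        · simp only [if_neg h]
          exact hLUP i (by omega) hi2
      · intro i hi1 hi2
        by_cases h : i = j + 1
        · subst h; simpa using hsplit
        · simp only [if_neg h]
          exact hSS i (by omega) hi2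
      · intro i hi1 hi2
        by_cases h : i = j + 1
        · subst h
          simp only [if_neg (show ¬ j + 1 = j by omega), if_pos rfl,
            if_pos (show j + 1 - 1 = j from rfl)]
          rw [ht1]; exact htnew
        · simp only [if_neg h, if_neg (show ¬ i = j by omega),
            if_neg (show ¬ i - 1 = j by omega)]
          exact hTS i (by omega) hi2
      · simp only [if_neg (show ¬ m = j + 1 by omega), if_neg (show ¬ m - 1 = j by omega)]
        exact hterm
      · intro i hi1 hi2
        by_cases h : i = j + 1
        · subst h; simpa using hcase
        · simp only [if_neg h, if_neg (show ¬ i - 1 = j by omega)]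
          exact hfirst i (by omega) hi2
      · intro i hi1 hi2
        by_cases h : i = j + 1
        · subst h
          simp only [if_pos rfl, if_neg (show ¬ j + 1 + 1 = j + 1 by omega)]
          rw [hs1]; exact hkey
        · simp only [if_neg h, if_neg (show ¬ i + 1 = j + 1 by omega)]
          exact hmono i (by omega) hi2
      · intro i hi1 hi2
        by_cases h : i = j + 1
        · subst h
          simp only [if_neg (show ¬ j + 1 = j by omega), if_pos (show j + 1 - 1 = j from rfl)]
          rw [ht1]; omega
        · simp only [if_neg (show ¬ i = j by omega), if_neg (show ¬ i - 1 = j by omega)]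
          exact htmono i (by omega) hi2
      · simp only [if_neg (show ¬ m = j + 1 by omega)]
        by_cases hm2 : m = j + 2
        · rw [if_pos (show m = j + 1 + 1 by omega)] at hbnd
          rw [if_pos (show m - 1 = j + 1 by omega)]
          omega
        · rw [if_neg (show ¬ m = j + 1 + 1 by omega)] at hbnd
          rw [if_neg (show ¬ m - 1 = j + 1 by omega)]
          omega

end Aux

/-- Lemma: for all distinct letters `a₀, a₁` and every word `t₀`, the border
recursion is defined up to some `m ≥ 1` and satisfies
`|s₁| < ⋯ < |s_m| = |t_{m-1}| ≤ ⋯ ≤ |t₀|`, `s_m = t_{m-1}`, and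
`|t₀| ≤ |s_m| + |s_{m-1}|` (with `s₀ = ε` when `m = 1`). -/
theorem border_recursion_exists (a₀ a₁ : A) (hne : a₀ ≠ a₁) (t₀ : List A) :
    ∃ (m : ℕ) (s t s' s'' : ℕ → List A),
      BorderRecursion a₀ a₁ t₀ m s t s' s'' ∧
      (∀ i, 1 ≤ i → i < m → (s i).length < (s (i + 1)).length) ∧
      (s m).length = (t (m - 1)).length ∧
      (∀ i, 1 ≤ i → i < m → (t i).length ≤ (t (i - 1)).length) ∧
      s m = t (m - 1) ∧
      t₀.length ≤ (s m).length + (s (m - 1)).length := by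
  obtain ⟨s1, hs1pre, h0⟩ := exists_shortestBorder (recLetter a₀ a₁ 1) t₀
  have h := aux_main a₀ a₁ hne t₀.length 0 t₀ s1 [] (by omega) h0 List.nil_prefix
    (unbordered_singleton _)
  obtain ⟨m, s, t, s', s'', hm, ht0, hs1, hSB, hLUP, hSS, hTS, hterm, hfirst,
    hmono, htmono, hbnd⟩ := h
  have hm1 : 1 ≤ m := by omega
  refine ⟨m, (fun i => if i = 0 then [] else s i), t, s', s'',
    ⟨hm1, ht0, by simp, ?_, ?_, ?_, ?_, ?_, ?_⟩, ?_, ?_, ?_, ?_, ?_⟩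
  · intro i h1 h2
    simp only [if_neg (show ¬ i = 0 by omega)]
    exact hSB i (by omega) h2
  · intro i h1 h2
    simp only [if_neg (show ¬ i = 0 by omega)]
    exact hLUP i (by omega) h2
  · intro i h1 h2
    simp only [if_neg (show ¬ i = 0 by omega)]
    exact hSS i (by omega) h2
  · intro i h1 h2
    exact hTS i (by omega) h2
  · simp only [if_neg (show ¬ m = 0 by omega)]
    exact hterm
  · intro i h1 h2
    simp only [if_neg (show ¬ i = 0 by omega)]
    exact hfirst i (by omega) h2
  · intro i h1 h2
    simp only [if_neg (show ¬ i = 0 by omega), if_neg (show ¬ i + 1 = 0 by omega)]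
    exact hmono i (by omega) h2
  · simp only [if_neg (show ¬ m = 0 by omega)]
    rw [hterm]
  · intro i h1 h2
    exact htmono i (by omega) h2
  · simp only [if_neg (show ¬ m = 0 by omega)]
    exact hterm
  · simp only [if_neg (show ¬ m = 0 by omega)]
    by_cases hm2 : m = 1
    · rw [if_pos (show m = 0 + 1 by omega)] at hbnd
      rw [if_pos (show m - 1 = 0 by omega)]
      simpa using hbnd
    · rw [if_neg (show ¬ m = 0 + 1 by omega)] at hbnd
      rw [if_neg (show ¬ m - 1 = 0 by omega)]
      simpa using hbnd
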